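/- Let G be a nonabelian finite 2-group with |G : G'| = 4, where G' is the derived subgroup. Then the number of conjugacy classes k(G) is not a power of 2. -/

import Mathlib

/-!
By induction on `|G|`, passing to `G ⧸ ⟨z⟩` for a central involution `z ∈ G'`, the group `G` has a
cyclic subgroup `A` of index `2`. For an abelian subgroup `A` of index `2` and `b ∉ A`, the map
`x ↦ ⁅x, b⁆` is a homomorphism from `A` onto `G'` with kernel `Z(G)`, so `|Z(G)| = |A| / |G'| = 2`.
Hence `|C(g)|` is `|G|`, `|A|` or `4` according as `g ∈ Z(G)`, `g ∈ A \ Z(G)` or `g ∉ A`, and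
counting commuting pairs, `k(G) |G| = ∑ g, |C(g)|`, gives `2 k(G) = |A| + 6`. As `4 ∣ |A|`, `k(G)`
is odd and larger than `1`.
-/

open Subgroup
open scoped commutatorElement

variable {G : Type*} [Group G]

theorem commutatorElement_eq_self_iff {x g : G} : ⁅x, g⁆ = x ↔ x = 1 := by
  rw [commutatorElement_def, mul_inv_eq_iff_eq_mul, mul_assoc, mul_right_inj, mul_eq_left,
    inv_eq_one]

theorem zpow_eq_one_or_eq_self_of_sq_eq_one {u : G} (hu : u ^ 2 = 1) (k : ℤ) :
    u ^ k = 1 ∨ u ^ k = u := by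
  obtain ⟨r, rfl | rfl⟩ := Int.even_or_odd' k
  · left
    rw [zpow_mul, zpow_ofNat, hu, one_zpow]
  · right
    rw [zpow_add, zpow_mul, zpow_ofNat, hu, one_zpow, one_mul, zpow_one]

theorem Subgroup.normal_of_le_center {H : Subgroup G} (h : H ≤ center G) : H.Normal :=
  ⟨fun n hn g => by rwa [mem_center_iff.mp (h hn) g, mul_inv_cancel_right]⟩

theorem Subgroup.card_subgroupOf (H K : Subgroup G) :
    Nat.card (H.subgroupOf K) = Nat.card (H ⊓ K : Subgroup G) := by
  rw [← inf_subgroupOf_right]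
  exact Nat.card_congr (subgroupOfEquivOfLe inf_le_right).toEquiv

theorem Subgroup.eq_top_of_index_eq_two_of_le {A K : Subgroup G} (hA : A.index = 2)
    (hAK : A ≤ K) {g : G} (hgK : g ∈ K) (hgA : g ∉ A) : K = ⊤ := by
  refine (eq_top_iff' K).mpr fun x => ?_
  by_cases hx : x ∈ A
  · exact hAK hx
  · have hxg : x * g⁻¹ ∈ A := by simp [mul_mem_iff_of_index_two hA, hx, hgA]
    simpa using K.mul_mem (hAK hxg) hgK

theorem Subgroup.mul_inv_mem_of_index_eq_two {A : Subgroup G} (hA : A.index = 2) {g h : G}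
    (hg : g ∉ A) (hh : h ∉ A) : g * h⁻¹ ∈ A := by
  simp [mul_mem_iff_of_index_two hA, hg, hh]

theorem Subgroup.commutatorElement_mem_left {A : Subgroup G} [A.Normal] {x : G} (hx : x ∈ A)
    (g : G) : ⁅x, g⁆ ∈ A :=
  commutator_le_left A ⊤ (commutator_mem_commutator hx (mem_top g))

def Subgroup.commutatorElementHom (A : Subgroup G) [A.Normal] [IsMulCommutative A] (b : G) :
    A →* G where
  toFun x := ⁅(x : G), b⁆
  map_one' := by simp
  map_mul' x y := by
    have hy := commutatorElement_mem_left y.2 b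
    simp only [coe_mul, commutatorElement_mul_left_eq_conj_mul, setLike_mul_comm x.2 hy,
      mul_inv_cancel_right]
    exact setLike_mul_comm hy (commutatorElement_mem_left x.2 b)

section CommutatorElementHom

variable {A : Subgroup G} [A.Normal] [IsMulCommutative A]

@[simp]
theorem Subgroup.commutatorElementHom_apply (b : G) (x : A) :
    A.commutatorElementHom b x = ⁅(x : G), b⁆ :=
  rfl

theorem Subgroup.ker_commutatorElementHom (b : G) :
    (A.commutatorElementHom b).ker = (centralizer {b}).subgroupOf A := by
  ext x
  rw [MonoidHom.mem_ker, mem_subgroupOf, mem_centralizer_singleton_iff,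
    commutatorElementHom_apply, commutatorElement_eq_one_iff_mul_comm]

theorem Subgroup.range_commutatorElementHom (hA : A.index = 2) {b : G} (hb : b ∉ A) :
    (A.commutatorElementHom b).range = _root_.commutator G := by
  set R := (A.commutatorElementHom b).range
  have hleft : ∀ u ∈ A, ∀ g, ⁅u, g⁆ ∈ R := by
    intro u hu g
    by_cases hg : g ∈ A
    · rw [commutatorElement_eq_one_iff_mul_comm.mpr (setLike_mul_comm hu hg)]
      exact R.one_mem
    · have hy := mul_inv_mem_of_index_eq_two hA hg hb
      have key : ⁅u, g⁆ = ⁅u, b⁆ := by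
        calc ⁅u, g⁆ = ⁅u, g * b⁻¹ * b⁆ := by rw [inv_mul_cancel_right]
          _ = (g * b⁻¹) * ⁅u, b⁆ * (g * b⁻¹)⁻¹ := by
            rw [commutatorElement_mul_right_eq_mul_conj,
              commutatorElement_eq_one_iff_mul_comm.mpr (setLike_mul_comm hu hy), one_mul,
              mul_assoc]
          _ = ⁅u, b⁆ := by
            rw [setLike_mul_comm hy (commutatorElement_mem_left hu b), mul_inv_cancel_right]
      exact key ▸ ⟨⟨u, hu⟩, rfl⟩
  refine le_antisymm ?_ ?_
  · rintro _ ⟨x, rfl⟩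
    exact commutator_mem_commutator (mem_top _) (mem_top _)
  · rw [_root_.commutator_def, commutator_le]
    intro g₁ _ g₂ _
    by_cases h₁ : g₁ ∈ A
    · exact hleft g₁ h₁ g₂
    by_cases h₂ : g₂ ∈ A
    · rw [← commutatorElement_inv]
      exact R.inv_mem (hleft g₂ h₂ g₁)
    · have : ⁅g₁, g₂⁆ = ⁅g₁ * g₂⁻¹, g₂⁆ := by simp [commutatorElement_def, mul_assoc]
      exact this ▸ hleft _ (mul_inv_mem_of_index_eq_two hA h₁ h₂) g₂

end CommutatorElementHom

section AbelianIndexTwo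

variable {A : Subgroup G} [IsMulCommutative A]

theorem Subgroup.le_centralizer_singleton_of_mem {g : G} (hg : g ∈ A) :
    A ≤ centralizer {g} :=
  (le_centralizer A).trans (centralizer_le (Set.singleton_subset_iff.mpr hg))

theorem Subgroup.center_le_of_index_eq_two (hA : A.index = 2) (hG : ¬ IsMulCommutative G) :
    center G ≤ A := by
  intro w hw
  by_contra hwA
  have hAZ : A ≤ center G := centralizer_eq_top_iff_subset.mp
    (eq_top_of_index_eq_two_of_le hA (le_centralizer A) (center_le_centralizer _ hw) hwA)
  exact hG (center_eq_top_iff.mp (eq_top_of_index_eq_two_of_le hA hAZ hw hwA))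

theorem Subgroup.center_eq_centralizer_inf_of_index_eq_two (hA : A.index = 2)
    (hG : ¬ IsMulCommutative G) {b : G} (hb : b ∉ A) : center G = centralizer {b} ⊓ A := by
  refine le_antisymm (le_inf (center_le_centralizer _) (center_le_of_index_eq_two hA hG)) ?_
  rintro x ⟨hxb, hxA⟩
  have hbx : b ∈ centralizer {x} :=
    mem_centralizer_singleton_iff.mpr (mem_centralizer_singleton_iff.mp hxb).symm
  exact centralizer_eq_top_iff_subset.mp
    (eq_top_of_index_eq_two_of_le hA (le_centralizer_singleton_of_mem hxA) hbx hb) rfl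

theorem Subgroup.centralizer_eq_of_index_eq_two (hA : A.index = 2) {g : G} (hg : g ∈ A)
    (hgZ : g ∉ center G) : centralizer {g} = A := by
  refine le_antisymm (fun y hy => ?_) (le_centralizer_singleton_of_mem hg)
  by_contra hyA
  exact hgZ (centralizer_eq_top_iff_subset.mp
    (eq_top_of_index_eq_two_of_le hA (le_centralizer_singleton_of_mem hg) hy hyA) rfl)

variable [Finite G]

theorem Subgroup.card_centralizer_inf_eq_two (hA : A.index = 2)
    (hidx : (_root_.commutator G).index = 4) {b : G} (hb : b ∉ A) :
    Nat.card (centralizer {b} ⊓ A : Subgroup G) = 2 := by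
  have := normal_of_index_eq_two hA
  have hkerG : Nat.card (A.commutatorElementHom b).ker * Nat.card (_root_.commutator G) =
      Nat.card A := by
    rw [← range_commutatorElementHom hA hb, ← index_ker]
    exact card_mul_index _
  have hGG : Nat.card (_root_.commutator G) * 4 = Nat.card G := hidx ▸ card_mul_index _
  have hAG : Nat.card A * 2 = Nat.card G := hA ▸ card_mul_index _
  rw [← card_subgroupOf, ← ker_commutatorElementHom]
  refine Nat.eq_of_mul_eq_mul_right (Nat.card_pos (α := _root_.commutator G)) ?_
  linarith

theorem Subgroup.card_center_eq_two (hA : A.index = 2) (hG : ¬ IsMulCommutative G)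
    (hidx : (_root_.commutator G).index = 4) : Nat.card (center G) = 2 := by
  obtain ⟨b, hb⟩ := SetLike.exists_not_mem_of_ne_top A (by rintro rfl; simp at hA)
  rw [center_eq_centralizer_inf_of_index_eq_two hA hG hb, card_centralizer_inf_eq_two hA hidx hb]

theorem Subgroup.card_centralizer_of_notMem (hA : A.index = 2)
    (hidx : (_root_.commutator G).index = 4) {g : G} (hg : g ∉ A) :
    Nat.card (centralizer {g}) = 4 := by
  have := normal_of_index_eq_two hA
  have hrel : A.relIndex (centralizer {g}) = 2 := by
    have hdvd : A.relIndex (centralizer {g}) ∣ 2 := hA ▸ relIndex_dvd_index_of_normal A _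
    refine ((Nat.dvd_prime Nat.prime_two).mp hdvd).resolve_left fun h => hg ?_
    exact relIndex_eq_one.mp h (mem_centralizer_singleton_iff.mpr rfl)
  rw [← card_mul_index (A.subgroupOf (centralizer {g})), ← relIndex, hrel, card_subgroupOf,
    inf_comm, card_centralizer_inf_eq_two hA hidx hg]

theorem Subgroup.card_centralizer_eq_of_index_eq_two (hA : A.index = 2)
    (hG : ¬ IsMulCommutative G) (hidx : (_root_.commutator G).index = 4) (g : G)
    [Decidable (g ∈ A)] [Decidable (g ∈ center G)] :
    Nat.card (centralizer {g}) =
      (if g ∈ A then Nat.card A else 4) + (if g ∈ center G then Nat.card A else 0) := by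
  by_cases hgZ : g ∈ center G
  · have hgA := center_le_of_index_eq_two hA hG hgZ
    rw [if_pos hgA, if_pos hgZ, ← two_mul, centralizer_eq_top_iff_subset.mpr
      (Set.singleton_subset_iff.mpr hgZ), card_top, ← hA, mul_comm, card_mul_index]
  · rw [if_neg hgZ, add_zero]
    split_ifs with hgA
    · rw [centralizer_eq_of_index_eq_two hA hgA hgZ]
    · exact card_centralizer_of_notMem hA hidx hgA

end AbelianIndexTwo

theorem card_commute_eq_sum_card_centralizer [Fintype G] :
    Nat.card {p : G × G // Commute p.1 p.2} = ∑ g : G, Nat.card (centralizer {g}) := by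
  rw [Nat.card_congr (Equiv.subtypeProdEquivSigmaSubtype fun g h : G => Commute g h),
    Nat.card_sigma (β := fun g => {h // Commute g h})]
  refine Finset.sum_congr rfl fun g _ => Nat.card_congr (Equiv.subtypeEquivRight fun h => ?_)
  rw [mem_centralizer_singleton_iff]
  exact eq_comm

theorem Subgroup.two_mul_card_conjClasses_eq [Finite G] {A : Subgroup G} [IsMulCommutative A]
    (hA : A.index = 2) (hG : ¬ IsMulCommutative G) (hidx : (_root_.commutator G).index = 4) :
    2 * Nat.card (ConjClasses G) = Nat.card A + 6 := by
  classical
  have := Fintype.ofFinite G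
  have hcard (H : Subgroup G) [DecidablePred (· ∈ H)] :
      (Finset.univ.filter (· ∈ H)).card = Nat.card H := by
    rw [Nat.card_eq_fintype_card, Fintype.card_subtype]
  have hsum := card_comm_eq_card_conjClasses_mul_card G
  simp only [card_commute_eq_sum_card_centralizer,
    card_centralizer_eq_of_index_eq_two hA hG hidx, Finset.sum_add_distrib, Finset.sum_ite,
    Finset.sum_const, smul_eq_mul, mul_zero, add_zero, hcard, card_center_eq_two hA hG hidx]
    at hsum
  have hcompl := Finset.card_filter_add_card_filter_not (s := Finset.univ) (· ∈ A)
  rw [hcard, Finset.card_univ, ← Nat.card_eq_fintype_card] at hcompl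
  have hAG : Nat.card A * 2 = Nat.card G := hA ▸ card_mul_index _
  refine Nat.eq_of_mul_eq_mul_left (Nat.card_pos (α := A)) ?_
  nlinarith

theorem IsPGroup.exists_orderOf_eq_mem_inf_center {p : ℕ} [Fact p.Prime] [Finite G]
    (hG : IsPGroup p G) {N : Subgroup G} [N.Normal] (hN : N ≠ ⊥) :
    ∃ z ∈ N ⊓ center G, orderOf z = p := by
  have hpN : p ∣ Nat.card N :=
    (hG.to_subgroup N).card_eq_or_dvd.resolve_left (by rwa [card_eq_one])
  have h1 : (1 : N) ∈ MulAction.fixedPoints (ConjAct G) N := fun g => by simp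
  obtain ⟨y, hy, hy1⟩ := (hG.of_equiv ConjAct.toConjAct)
    |>.exists_fixed_point_of_prime_dvd_card_of_fixed_point N hpN h1
  have hyZ : (y : G) ∈ center G := by
    rw [mem_center_iff]
    intro g
    have := congrArg Subtype.val (hy (ConjAct.toConjAct g))
    rw [ConjAct.Subgroup.val_conj_smul, ConjAct.smul_def, ConjAct.ofConjAct_toConjAct] at this
    rw [← mul_inv_eq_iff_eq_mul, this]
  have hpNZ : p ∣ Nat.card (N ⊓ center G : Subgroup G) := by
    refine ((hG.to_subgroup _).card_eq_or_dvd).resolve_left fun h => hy1 ?_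
    have := (card_eq_one.mp h).symm ▸ (show (y : G) ∈ N ⊓ center G from ⟨y.2, hyZ⟩)
    exact Subtype.ext (mem_bot.mp this).symm
  obtain ⟨z, hz⟩ := exists_prime_orderOf_dvd_card' p hpNZ
  exact ⟨z, z.2, by rw [orderOf_coe, hz]⟩

theorem index_commutator_quotient_of_le {N : Subgroup G} [N.Normal]
    (hN : N ≤ _root_.commutator G) :
    (_root_.commutator (G ⧸ N)).index = (_root_.commutator G).index := by
  have hmk := QuotientGroup.mk'_surjective N
  rw [← index_map_eq _ hmk (by rwa [QuotientGroup.ker_mk']), map_commutator_eq,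
    MonoidHom.range_eq_top_of_surjective _ hmk, _root_.commutator_def]

theorem exists_eq_zpow_mul_zpow_of_mk_mem_zpowers {z a x : G} [(zpowers z).Normal]
    (hx : (x : G ⧸ zpowers z) ∈ zpowers (a : G ⧸ zpowers z)) :
    ∃ k j : ℤ, x = a ^ k * z ^ j := by
  obtain ⟨k, hk⟩ := mem_zpowers_iff.mp hx
  rw [← QuotientGroup.mk_zpow, QuotientGroup.eq] at hk
  obtain ⟨j, hj⟩ := mem_zpowers_iff.mp hk
  exact ⟨k, j, by rw [hj, mul_inv_cancel_left]⟩

theorem exists_zpowers_index_eq_two_of_card_eq_eight (hG : ¬ IsMulCommutative G)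
    (h8 : Nat.card G = 8) : ∃ a : G, (zpowers a).index = 2 := by
  have : Finite G := Nat.finite_of_card_ne_zero (by omega)
  obtain ⟨a, ha⟩ : ∃ a : G, a ^ 2 ≠ 1 := by
    by_contra! h
    refine hG (isMulCommutative_iff.mpr fun x y => ?_)
    have hinv (w : G) : w⁻¹ = w := inv_eq_of_mul_eq_one_right (by rw [← sq, h])
    rw [← hinv (x * y), mul_inv_rev, hinv, hinv]
  obtain ⟨s, hs, hord⟩ := (Nat.dvd_prime_pow Nat.prime_two).mp
    (by simpa [h8] using orderOf_dvd_natCard a : orderOf a ∣ 2 ^ 3)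
  have hs2 : s = 2 := by
    interval_cases s
    · exact absurd (orderOf_eq_one_iff.mp hord) (by rintro rfl; simp at ha)
    · exact absurd (by simpa [hord] using pow_orderOf_eq_one a) ha
    · rfl
    · exact absurd (isCyclic_of_orderOf_eq_card a (by rw [hord, h8]; rfl)).isMulCommutative hG
  have hcard := card_mul_index (zpowers a)
  rw [Nat.card_zpowers, hord, hs2, h8] at hcard
  exact ⟨a, by omega⟩

/-- Since `z` is central, `x ↦ ⁅x, b⁆` maps `A = ⟨a, z⟩` onto `G' = ⟨⁅a, b⁆⟩`, so
`⁅a, b⁆ ^ M ≠ 1`. If `a ^ |G'| = 1`, then `⁅a, b⁆ = a ^ k z ^ j` gives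
`⁅a, b⁆ ^ M = (a ^ M) ^ k = a ^ M`, a nontrivial element with `⁅a ^ M, b⁆ = a ^ M`. -/
theorem pow_card_commutator_ne_one [Finite G] {A : Subgroup G} [IsMulCommutative A]
    (hA : A.index = 2) {a z : G} (ha : a ∈ A) (hz : z ∈ center G) (hz2 : z ^ 2 = 1)
    (hAaz : ∀ x ∈ A, ∃ k j : ℤ, x = a ^ k * z ^ j) {M : ℕ}
    (hM : Nat.card (_root_.commutator G) = 2 * M) (hM2 : 2 ∣ M) (hu : a ^ M ≠ 1) :
    a ^ Nat.card (_root_.commutator G) ≠ 1 := by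
  rw [hM]
  intro ha2
  have hM0 : M ≠ 0 := by rintro rfl; simp at hu
  have := normal_of_index_eq_two hA
  obtain ⟨b, hb⟩ := SetLike.exists_not_mem_of_ne_top A (by rintro rfl; simp at hA)
  set c := ⁅a, b⁆
  have hψ (k : ℤ) : ⁅a ^ k, b⁆ = c ^ k := by
    simpa using map_zpow (A.commutatorElementHom b) ⟨a, ha⟩ k
  have hψz (k j : ℤ) : ⁅a ^ k * z ^ j, b⁆ = c ^ k := by
    rw [commutatorElement_mul_left_eq_conj_mul, commutatorElement_eq_one_iff_mul_comm.mpr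
      (mem_center_iff.mp (zpow_mem hz j) b).symm, mul_one, mul_inv_cancel, one_mul, hψ]
  have hrange : _root_.commutator G ≤ zpowers c := by
    rw [← range_commutatorElementHom hA hb]
    rintro _ ⟨x, rfl⟩
    obtain ⟨k, j, hx⟩ := hAaz x x.2
    rw [commutatorElementHom_apply, hx, hψz]
    exact zpow_mem (mem_zpowers c) k
  have hcM : c ^ M ≠ 1 := by
    intro h
    have := (card_le_of_le hrange).trans ((Nat.card_zpowers c).le.trans
      (orderOf_le_of_pow_eq_one (Nat.pos_of_ne_zero hM0) h))
    omega
  obtain ⟨k, j, hc⟩ := hAaz c (commutatorElement_mem_left ha b)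
  have hcu : c ^ M = (a ^ M) ^ k := by
    have hzM : (z ^ j) ^ M = 1 := by
      obtain ⟨r, rfl⟩ := hM2
      rcases zpow_eq_one_or_eq_self_of_sq_eq_one hz2 j with h | h <;> simp [h, pow_mul, hz2]
    rw [hc, (Commute.zpow_right (mem_center_iff.mp hz _) j).mul_pow, hzM, mul_one,
      ← zpow_natCast, ← zpow_natCast, ← zpow_mul, ← zpow_mul, mul_comm]
  have hu2 : (a ^ M) ^ 2 = 1 := by rw [← pow_mul, mul_comm, ha2]
  rcases zpow_eq_one_or_eq_self_of_sq_eq_one hu2 k with h | h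
  · exact hcM (hcu.trans h)
  · refine hu (commutatorElement_eq_self_iff (g := b).mp ?_)
    rw [← zpow_natCast, hψ, zpow_natCast, hcu, h, zpow_natCast]

theorem exists_zpowers_index_eq_two_of_quotient [Finite G]
    {z : G} (hzZ : z ∈ center G) (hz : orderOf z = 2) [(zpowers z).Normal] {M : ℕ}
    (hM : Nat.card (_root_.commutator G) = 2 * M) (hM2 : 2 ∣ M)
    (hidx : (_root_.commutator G).index = 4) {a : G}
    (ha : (zpowers (a : G ⧸ zpowers z)).index = 2) : ∃ a : G, (zpowers a).index = 2 := by
  set A := (zpowers (a : G ⧸ zpowers z)).comap (QuotientGroup.mk' (zpowers z))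
  have hA : A.index = 2 := by rwa [index_comap_of_surjective _ (QuotientGroup.mk'_surjective _)]
  have haA : a ∈ A := mem_comap.mpr (mem_zpowers _)
  have hAaz (x : G) (hx : x ∈ A) : ∃ k j : ℤ, x = a ^ k * z ^ j :=
    exists_eq_zpow_mul_zpow_of_mk_mem_zpowers hx
  have hz2 : z ^ 2 = 1 := hz ▸ pow_orderOf_eq_one z
  have : IsMulCommutative A := by
    refine IsMulCommutative.of_setLike_mul_comm fun x hx y hy => ?_
    obtain ⟨k, j, rfl⟩ := hAaz x hx
    obtain ⟨l, i, rfl⟩ := hAaz y hy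
    have hz (g : G) : Commute g z := mem_center_iff.mp hzZ g
    exact (((Commute.zpow_zpow_self a k l).mul_right ((hz _).zpow_right i)).mul_left
      (((hz _).zpow_right j).symm.mul_right (Commute.zpow_zpow_self z j i)))
  have hord : orderOf (a : G ⧸ zpowers z) = 2 * M := by
    have h1 := card_mul_index (zpowers z)
    have h2 := card_mul_index (zpowers (a : G ⧸ zpowers z))
    have h3 := card_mul_index (_root_.commutator G)
    rw [Nat.card_zpowers, hz, index_eq_card] at h1
    rw [Nat.card_zpowers, ha] at h2
    rw [hM, hidx] at h3
    omega
  have hu : a ^ M ≠ 1 := fun h => by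
    have hM0 : 0 < M := by
      have := Nat.card_pos (α := _root_.commutator G)
      omega
    have hle := orderOf_le_of_pow_eq_one hM0
      (by rw [← QuotientGroup.mk_pow, h, QuotientGroup.mk_one] : (a : G ⧸ zpowers z) ^ M = 1)
    omega
  have ha2 := hM ▸ pow_card_commutator_ne_one hA haA hzZ hz2 hAaz hM hM2 hu
  obtain ⟨j, hj⟩ : ∃ j : ℤ, z ^ j = a ^ (2 * M) := mem_zpowers_iff.mp <|
    (QuotientGroup.eq_one_iff _).mp (by rw [QuotientGroup.mk_pow, ← hord, pow_orderOf_eq_one])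
  have hza : z ∈ zpowers a := by
    rcases zpow_eq_one_or_eq_self_of_sq_eq_one hz2 j with h | h
    · exact absurd (hj ▸ h) ha2
    · exact h ▸ hj ▸ pow_mem (mem_zpowers a) _
  refine ⟨a, le_antisymm (zpowers_le.mpr haA) (fun x hx => ?_) ▸ hA⟩
  obtain ⟨k, j, rfl⟩ := hAaz x hx
  exact mul_mem (zpow_mem (mem_zpowers a) k) (zpow_mem hza j)

theorem IsPGroup.exists_zpowers_index_eq_two [Finite G]
    (hG : IsPGroup 2 G) (hna : ¬ IsMulCommutative G) (hidx : (_root_.commutator G).index = 4) :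
    ∃ a : G, (zpowers a).index = 2 := by
  induction hn : Nat.card G using Nat.strong_induction_on generalizing G with
  | _ n ih =>
  have hGG' : Nat.card (_root_.commutator G) * 4 = Nat.card G := hidx ▸ card_mul_index _
  obtain ⟨z, ⟨hzG', hzZ⟩, hz⟩ := hG.exists_orderOf_eq_mem_inf_center
    (N := _root_.commutator G) (by rwa [Ne, commutator_eq_bot_iff])
  obtain ⟨s, hs⟩ := (hG.to_subgroup (_root_.commutator G)).exists_card_eq
  have hs1 : s ≠ 0 := by
    rintro rfl
    rw [pow_zero, card_eq_one] at hs
    exact absurd (orderOf_eq_one_iff.mpr (mem_bot.mp (hs ▸ hzG'))) (by omega)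
  obtain rfl | hs2 := eq_or_ne s 1
  · exact exists_zpowers_index_eq_two_of_card_eq_eight hna (by omega)
  have hM : Nat.card (_root_.commutator G) = 2 * 2 ^ (s - 1) := by
    rw [hs, ← pow_succ', Nat.sub_add_cancel (by omega)]
  have hM2 : 2 ∣ 2 ^ (s - 1) := dvd_pow_self 2 (by omega)
  have := normal_of_le_center (zpowers_le.mpr hzZ)
  have hQ : Nat.card (G ⧸ zpowers z) * 2 = Nat.card G := by
    rw [← index_eq_card, ← hz, ← Nat.card_zpowers, mul_comm, card_mul_index]
  have hQna : ¬ IsMulCommutative (G ⧸ zpowers z) := by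
    rw [Normal.quotient_commutative_iff_commutator_le]
    intro hle
    have := card_le_of_le (K := zpowers z) hle
    rw [Nat.card_zpowers, hz, hM] at this
    have := Nat.one_lt_two_pow (by omega : s - 1 ≠ 0)
    omega
  have hQlt : Nat.card (G ⧸ zpowers z) < n := by
    have := Nat.card_pos (α := G)
    omega
  obtain ⟨a, ha⟩ := ih _ hQlt (hG.to_quotient _) hQna
    (by rwa [index_commutator_quotient_of_le (zpowers_le.mpr hzG')]) rfl
  obtain ⟨a, rfl⟩ := QuotientGroup.mk_surjective a
  exact exists_zpowers_index_eq_two_of_quotient hzZ hz hM hM2 hidx ha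

/-- If `G` is a nonabelian finite `2`-group with `|G : G'| = 4`, then the number
of conjugacy classes `k(G)` is not a power of `2`. -/
theorem card_conjClasses_not_two_pow_of_index_four
    (G : Type) [Group G] [Finite G] (hG : IsPGroup 2 G)
    (hna : ¬ ∀ x y : G, x * y = y * x)
    (hidx : (commutator G).index = 4) :
    ¬ ∃ m : ℕ, Nat.card (ConjClasses G) = 2 ^ m := by
  rw [← isMulCommutative_iff] at hna
  obtain ⟨a, ha⟩ := hG.exists_zpowers_index_eq_two hna hidx
  have hk := two_mul_card_conjClasses_eq ha hna hidx
  have hG'2 : 2 ∣ Nat.card (commutator G) := (hG.to_subgroup _).card_eq_or_dvd.resolve_left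
    (by rwa [card_eq_one, commutator_eq_bot_iff])
  have hA := card_mul_index (zpowers a)
  have hG' := card_mul_index (commutator G)
  rw [ha] at hA
  rw [hidx] at hG'
  rintro ⟨m, hm⟩
  rcases m with _ | m
  · omega
  · rw [pow_succ] at hm
    omega
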